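/- arXiv:2409.08634 — 8 statements merged into one kernel-verified Lean document; each statement's English description precedes it below -/
import Mathlib

section
/- Consider the OpenRC dynamics with explicit weights. Assume: (i) for every k and every departing agent i ∈ D k, the set N k i ∩ R k is nonempty; (ii) the state x : ℕ → Fin n → ℝ satisfies, for every k, x (k+1) j = (1/(1 + |N k j ∩ R k|)) · x k j + ∑_{i ∈ R k with j ∈ N k i} (1/(1 + |N k i ∩ R k|)) · x k i + ∑_{i ∈ D k with j ∈ N k i} (1/|N k i ∩ R k|) · (x k i − x̂ k i) whenever j ∈ R k, x (k+1) j = x̂ (k+1) j whenever j ∈ J k, and x (k+1) j = 0 whenever j ∉ V (k+1); (iii) at time 0, x 0 j = x̂ 0 j for every j ∈ V 0, and x 0 j = 0 for j ∉ V 0. Then for every k ≥ 0, ∑_{j ∈ V k} x k j = ∑_{j ∈ V k} x̂ k j (Theorem 1, x-variables: the total x-mass of the active agents always equals the total of their joining masses). -/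
theorem swap_sum_aux {n : ℕ} (R S : Finset (Fin n)) (N : Fin n → Finset (Fin n))
    (g : Fin n → ℝ) :
    ∑ j ∈ R, ∑ i ∈ S.filter (fun i => j ∈ N i), g i
      = ∑ i ∈ S, ((N i ∩ R).card : ℝ) * g i := by
  simp only [Finset.sum_filter]
  rw [Finset.sum_comm]
  refine Finset.sum_congr rfl fun i _ => ?_
  rw [← Finset.sum_filter, Finset.sum_const, Finset.filter_mem_eq_inter,
    Finset.inter_comm, nsmul_eq_mul]

/-- Theorem 1 (x-variables) of the OpenRC paper: under the OpenRC dynamics with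
explicit weights, the total x-mass of the active agents always equals the total
of their joining masses. -/
theorem openRC_mass_preservation_x {n : ℕ}
    (V : ℕ → Finset (Fin n)) (N : ℕ → Fin n → Finset (Fin n))
    (x xhat : ℕ → Fin n → ℝ)
    -- context: no self-loops and neighborhoods consist of active agents
    (hNself : ∀ k j, j ∉ N k j)
    (hNsub : ∀ k j, j ∈ V k → N k j ⊆ V k)
    -- context: joining masses of remaining agents do not change
    (hxhatR : ∀ k, ∀ j ∈ V k ∩ V (k + 1), xhat (k + 1) j = xhat k j)
    -- (i) every departing agent has a remaining out-neighbor
    (hDne : ∀ k, ∀ i ∈ V k \ V (k + 1), (N k i ∩ (V k ∩ V (k + 1))).Nonempty)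
    -- (ii) the OpenRC update with explicit weights
    (hrem : ∀ k, ∀ j ∈ V k ∩ V (k + 1),
      x (k + 1) j =
        (1 / (1 + ((N k j ∩ (V k ∩ V (k + 1))).card : ℝ))) * x k j
        + ∑ i ∈ (V k ∩ V (k + 1)).filter (fun i => j ∈ N k i),
            (1 / (1 + ((N k i ∩ (V k ∩ V (k + 1))).card : ℝ))) * x k i
        + ∑ i ∈ (V k \ V (k + 1)).filter (fun i => j ∈ N k i),
            (1 / ((N k i ∩ (V k ∩ V (k + 1))).card : ℝ)) * (x k i - xhat k i))
    (hjoin : ∀ k, ∀ j ∈ V (k + 1) \ V k, x (k + 1) j = xhat (k + 1) j)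
    (hout : ∀ k, ∀ j, j ∉ V (k + 1) → x (k + 1) j = 0)
    -- (iii) initial condition
    (hinit : ∀ j ∈ V 0, x 0 j = xhat 0 j)
    (hinit0 : ∀ j, j ∉ V 0 → x 0 j = 0) :
    ∀ k, ∑ j ∈ V k, x k j = ∑ j ∈ V k, xhat k j := by
  intro k
  induction k with
  | zero => exact Finset.sum_congr rfl hinit
  | succ k ih =>
    have hsplit : ∑ j ∈ V k ∩ V (k+1), x k j + ∑ j ∈ V k \ V (k+1), x k j
        = ∑ j ∈ V k, x k j := Finset.sum_inter_add_sum_sdiff _ _ _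
    have hsplit' : ∑ j ∈ V k ∩ V (k+1), xhat k j + ∑ j ∈ V k \ V (k+1), xhat k j
        = ∑ j ∈ V k, xhat k j := Finset.sum_inter_add_sum_sdiff _ _ _
    -- key: sum over remaining agents
    have key : ∑ j ∈ V k ∩ V (k+1), x (k+1) j = ∑ j ∈ V k ∩ V (k+1), xhat k j := by
      have h1 : ∑ j ∈ V k ∩ V (k+1), x (k+1) j
          = (∑ j ∈ V k ∩ V (k+1),
              (1 / (1 + ((N k j ∩ (V k ∩ V (k + 1))).card : ℝ))) * x k j
            + ∑ i ∈ V k ∩ V (k+1), ((N k i ∩ (V k ∩ V (k+1))).card : ℝ) *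
                ((1 / (1 + ((N k i ∩ (V k ∩ V (k + 1))).card : ℝ))) * x k i))
            + ∑ i ∈ V k \ V (k+1), ((N k i ∩ (V k ∩ V (k+1))).card : ℝ) *
                ((1 / ((N k i ∩ (V k ∩ V (k + 1))).card : ℝ)) * (x k i - xhat k i)) := by
        rw [Finset.sum_congr rfl (hrem k), Finset.sum_add_distrib, Finset.sum_add_distrib,
          swap_sum_aux, swap_sum_aux]
      have h2 : ∑ j ∈ V k ∩ V (k+1),
              (1 / (1 + ((N k j ∩ (V k ∩ V (k + 1))).card : ℝ))) * x k j
            + ∑ i ∈ V k ∩ V (k+1), ((N k i ∩ (V k ∩ V (k+1))).card : ℝ) *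
                ((1 / (1 + ((N k i ∩ (V k ∩ V (k + 1))).card : ℝ))) * x k i)
          = ∑ j ∈ V k ∩ V (k+1), x k j := by
        rw [← Finset.sum_add_distrib]
        refine Finset.sum_congr rfl fun i _ => ?_
        have hc : (1 : ℝ) + ((N k i ∩ (V k ∩ V (k+1))).card : ℝ) ≠ 0 := by positivity
        field_simp
      have h3 : ∑ i ∈ V k \ V (k+1), ((N k i ∩ (V k ∩ V (k+1))).card : ℝ) *
                ((1 / ((N k i ∩ (V k ∩ V (k + 1))).card : ℝ)) * (x k i - xhat k i))
          = ∑ i ∈ V k \ V (k+1), (x k i - xhat k i) := by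
        refine Finset.sum_congr rfl fun i hi => ?_
        have hc : ((N k i ∩ (V k ∩ V (k+1))).card : ℝ) ≠ 0 :=
          Nat.cast_ne_zero.mpr (Finset.card_pos.mpr (hDne k i hi)).ne'
        field_simp
      rw [h1, h2, h3, Finset.sum_sub_distrib]
      have := ih
      linarith [hsplit, hsplit']
    -- now assemble the sum over V (k+1)
    have hJ : ∑ j ∈ V (k+1) \ V k, x (k+1) j = ∑ j ∈ V (k+1) \ V k, xhat (k+1) j :=
      Finset.sum_congr rfl (hjoin k)
    have hR' : ∑ j ∈ V k ∩ V (k+1), xhat (k+1) j = ∑ j ∈ V k ∩ V (k+1), xhat k j :=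
      Finset.sum_congr rfl (hxhatR k)
    have e1 : ∑ j ∈ V (k+1) ∩ V k, x (k+1) j + ∑ j ∈ V (k+1) \ V k, x (k+1) j
        = ∑ j ∈ V (k+1), x (k+1) j := Finset.sum_inter_add_sum_sdiff _ _ _
    have e2 : ∑ j ∈ V (k+1) ∩ V k, xhat (k+1) j + ∑ j ∈ V (k+1) \ V k, xhat (k+1) j
        = ∑ j ∈ V (k+1), xhat (k+1) j := Finset.sum_inter_add_sum_sdiff _ _ _
    rw [Finset.inter_comm] at e1 e2
    linarith [key, hJ, hR', e1, e2]
end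

section
/- Consider the OpenRC dynamics with explicit weights applied to the auxiliary variables y : ℕ → Fin n → ℝ, whose joining values are identically 1. Assume: (i) for every k and every departing agent i ∈ D k, the set N k i ∩ R k is nonempty; (ii) for every k, y (k+1) j = (1/(1 + |N k j ∩ R k|)) · y k j + ∑_{i ∈ R k with j ∈ N k i} (1/(1 + |N k i ∩ R k|)) · y k i + ∑_{i ∈ D k with j ∈ N k i} (1/|N k i ∩ R k|) · (y k i − 1) whenever j ∈ R k, y (k+1) j = 1 whenever j ∈ J k, and y (k+1) j = 0 whenever j ∉ V (k+1); (iii) at time 0, y 0 j = 1 for every j ∈ V 0 and y 0 j = 0 otherwise. Then for every k ≥ 0, ∑_{j ∈ V k} y k j = |V k| (Theorem 1, y-variables: the total y-mass of the active agents always equals the current number of active agents). -/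
/-- Theorem 1 (y-variables) of the OpenRC paper: under the OpenRC dynamics with
explicit weights applied to the auxiliary variables (whose joining values are
identically 1), the total y-mass of the active agents always equals the current
number of active agents. -/
theorem openRC_mass_preservation_y {n : ℕ}
    (V : ℕ → Finset (Fin n)) (N : ℕ → Fin n → Finset (Fin n))
    (y : ℕ → Fin n → ℝ)
    -- context: no self-loops and neighborhoods consist of active agents
    (hNself : ∀ k j, j ∉ N k j)
    (hNsub : ∀ k j, j ∈ V k → N k j ⊆ V k)
    -- (i) every departing agent has a remaining out-neighbor
    (hDne : ∀ k, ∀ i ∈ V k \ V (k + 1), (N k i ∩ (V k ∩ V (k + 1))).Nonempty)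
    -- (ii) the OpenRC update with explicit weights
    (hrem : ∀ k, ∀ j ∈ V k ∩ V (k + 1),
      y (k + 1) j =
        (1 / (1 + ((N k j ∩ (V k ∩ V (k + 1))).card : ℝ))) * y k j
        + ∑ i ∈ (V k ∩ V (k + 1)).filter (fun i => j ∈ N k i),
            (1 / (1 + ((N k i ∩ (V k ∩ V (k + 1))).card : ℝ))) * y k i
        + ∑ i ∈ (V k \ V (k + 1)).filter (fun i => j ∈ N k i),
            (1 / ((N k i ∩ (V k ∩ V (k + 1))).card : ℝ)) * (y k i - 1))
    (hjoin : ∀ k, ∀ j ∈ V (k + 1) \ V k, y (k + 1) j = 1)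
    (hout : ∀ k, ∀ j, j ∉ V (k + 1) → y (k + 1) j = 0)
    -- (iii) initial condition
    (hinit : ∀ j ∈ V 0, y 0 j = 1)
    (hinit0 : ∀ j, j ∉ V 0 → y 0 j = 0) :
    ∀ k, ∑ j ∈ V k, y k j = ((V k).card : ℝ) := by
  intro k
  induction k with
  | zero =>
    rw [Finset.sum_congr rfl (fun j hj => hinit j hj), Finset.sum_const, nsmul_eq_mul, mul_one]
  | succ k ih =>
    have hdisjRJ : Disjoint (V k ∩ V (k + 1)) (V (k + 1) \ V k) := by
      simp only [Finset.disjoint_left, Finset.mem_inter, Finset.mem_sdiff]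
      tauto
    have hdisjRD : Disjoint (V k ∩ V (k + 1)) (V k \ V (k + 1)) := by
      simp only [Finset.disjoint_left, Finset.mem_inter, Finset.mem_sdiff]
      tauto
    have hVk1 : V (k + 1) = (V k ∩ V (k + 1)) ∪ (V (k + 1) \ V k) := by
      ext j; simp only [Finset.mem_union, Finset.mem_inter, Finset.mem_sdiff]; tauto
    have hVk : V k = (V k ∩ V (k + 1)) ∪ (V k \ V (k + 1)) := by
      ext j; simp only [Finset.mem_union, Finset.mem_inter, Finset.mem_sdiff]; tauto
    have hfilt : ∀ (i : Fin n),
        (V k ∩ V (k + 1)).filter (fun j => j ∈ N k i) = N k i ∩ (V k ∩ V (k + 1)) := by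
      intro i; ext j
      simp only [Finset.mem_filter, Finset.mem_inter]
      tauto
    have hswap : ∀ (S : Finset (Fin n)) (g : Fin n → ℝ),
        ∑ j ∈ V k ∩ V (k + 1), ∑ i ∈ S.filter (fun i => j ∈ N k i), g i
          = ∑ i ∈ S, ((N k i ∩ (V k ∩ V (k + 1))).card : ℝ) * g i := by
      intro S g
      have hstep : ∀ j ∈ V k ∩ V (k + 1), ∑ i ∈ S.filter (fun i => j ∈ N k i), g i
          = ∑ i ∈ S, if j ∈ N k i then g i else 0 := by
        intro j _; rw [Finset.sum_filter]
      rw [Finset.sum_congr rfl hstep, Finset.sum_comm]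
      refine Finset.sum_congr rfl fun i _ => ?_
      rw [← Finset.sum_filter, hfilt, Finset.sum_const, nsmul_eq_mul]
    have hRsum : ∑ j ∈ V k ∩ V (k + 1), y (k + 1) j
        = ∑ i ∈ V k ∩ V (k + 1), y k i + ∑ i ∈ V k \ V (k + 1), (y k i - 1) := by
      rw [Finset.sum_congr rfl (fun j hj => hrem k j hj)]
      rw [Finset.sum_add_distrib, Finset.sum_add_distrib, hswap, hswap]
      have h1 : ∑ j ∈ V k ∩ V (k + 1),
            (1 / (1 + ((N k j ∩ (V k ∩ V (k + 1))).card : ℝ))) * y k j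
          + ∑ i ∈ V k ∩ V (k + 1), ((N k i ∩ (V k ∩ V (k + 1))).card : ℝ) *
              ((1 / (1 + ((N k i ∩ (V k ∩ V (k + 1))).card : ℝ))) * y k i)
          = ∑ i ∈ V k ∩ V (k + 1), y k i := by
        rw [← Finset.sum_add_distrib]
        refine Finset.sum_congr rfl fun i _ => ?_
        have hne : (1 + ((N k i ∩ (V k ∩ V (k + 1))).card : ℝ)) ≠ 0 := by
          have : (0:ℝ) ≤ ((N k i ∩ (V k ∩ V (k + 1))).card : ℝ) := Nat.cast_nonneg _
          linarith
        field_simp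
      have h2 : ∑ i ∈ V k \ V (k + 1), ((N k i ∩ (V k ∩ V (k + 1))).card : ℝ) *
            ((1 / ((N k i ∩ (V k ∩ V (k + 1))).card : ℝ)) * (y k i - 1))
          = ∑ i ∈ V k \ V (k + 1), (y k i - 1) := by
        refine Finset.sum_congr rfl fun i hi => ?_
        have hpos : 0 < (N k i ∩ (V k ∩ V (k + 1))).card :=
          Finset.card_pos.2 (hDne k i hi)
        have hne : ((N k i ∩ (V k ∩ V (k + 1))).card : ℝ) ≠ 0 := by
          exact_mod_cast hpos.ne'
        field_simp
      rw [h1, h2]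
    have hJsum : ∑ j ∈ V (k + 1) \ V k, y (k + 1) j = ((V (k + 1) \ V k).card : ℝ) := by
      rw [Finset.sum_congr rfl (fun j hj => hjoin k j hj), Finset.sum_const, nsmul_eq_mul,
        mul_one]
    have hcard1 : ((V (k + 1)).card : ℝ)
        = ((V k ∩ V (k + 1)).card : ℝ) + ((V (k + 1) \ V k).card : ℝ) := by
      have h := Finset.card_inter_add_card_sdiff (V (k + 1)) (V k)
      rw [Finset.inter_comm] at h
      rw [← h]; push_cast; ring
    have hcard : ((V k).card : ℝ)
        = ((V k ∩ V (k + 1)).card : ℝ) + ((V k \ V (k + 1)).card : ℝ) := by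
      have h := Finset.card_inter_add_card_sdiff (V k) (V (k + 1))
      rw [← h]; push_cast; ring
    have hsplitk : ∑ j ∈ V k, y k j
        = ∑ j ∈ V k ∩ V (k + 1), y k j + ∑ j ∈ V k \ V (k + 1), y k j := by
      conv_lhs => rw [hVk]
      rw [Finset.sum_union hdisjRD]
    have hsum : ∑ j ∈ V k ∩ V (k + 1), y k j + ∑ j ∈ V k \ V (k + 1), y k j
        = ((V k).card : ℝ) := hsplitk.symm.trans ih
    conv_lhs => rw [hVk1]
    rw [Finset.sum_union hdisjRJ, hRsum, hJsum, Finset.sum_sub_distrib,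
      Finset.sum_const, nsmul_eq_mul, mul_one]
    linarith [hsum, hcard, hcard1]
end

section
/- Fix a time step k and abstract weight functions a, b : Fin n → Fin n → ℝ satisfying the column-sum conditions: for every i ∈ R k, ∑_{j ∈ R k} a j i = 1, and for every i ∈ D k, ∑_{j ∈ R k} b j i = 1. Suppose the state x : ℕ → Fin n → ℝ satisfies: x (k+1) j = ∑_{i ∈ R k} a j i · x k i + ∑_{i ∈ D k} b j i · (x k i − x̂ k i) for every j ∈ R k, and x (k+1) j = x̂ (k+1) j for every j ∈ J k. Then ∑_{j ∈ V (k+1)} x (k+1) j = ∑_{j ∈ R k} x k j + ∑_{j ∈ D k} (x k j − x̂ k j) + ∑_{j ∈ J k} x̂ (k+1) j (the one-step mass decomposition used in the inductive step of Theorem 1). -/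
/-!
Column-stochastic weights conserve mass. Split `V (k+1)` into remaining and joining agents: the
remaining agents receive the redistributed masses of the remaining agents and the redistributed
surpluses `x k i - xhat k i` of the departing ones, so both totals are unchanged, while the joining
agents carry their joining masses.
-/

theorem Finset.sum_sum_mul_eq_sum_of_sum_eq_one {ι κ R : Type*} [NonAssocSemiring R]
    {s : Finset ι} {t : Finset κ} {a : κ → ι → R} (y : ι → R)
    (ha : ∀ i ∈ s, ∑ j ∈ t, a j i = 1) :
    ∑ j ∈ t, ∑ i ∈ s, a j i * y i = ∑ i ∈ s, y i := by
  rw [Finset.sum_comm]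
  refine Finset.sum_congr rfl fun i hi => ?_
  rw [← Finset.sum_mul, ha i hi, one_mul]

/-- One-step mass decomposition used in the inductive step of Theorem 1 of the
OpenRC paper: if the mixing weights have column sums equal to 1 over the
remaining agents, then the total mass of the active agents at time k+1
decomposes into the remaining mass, the departing surplus, and the joining
masses. -/
theorem openRC_one_step_mass_decomposition {n : ℕ}
    (V : ℕ → Finset (Fin n)) (xhat : ℕ → Fin n → ℝ)
    (x : ℕ → Fin n → ℝ) (k : ℕ)
    (a b : Fin n → Fin n → ℝ)
    -- column-sum conditions
    (ha : ∀ i ∈ V k ∩ V (k + 1), ∑ j ∈ V k ∩ V (k + 1), a j i = 1)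
    (hb : ∀ i ∈ V k \ V (k + 1), ∑ j ∈ V k ∩ V (k + 1), b j i = 1)
    -- the update
    (hrem : ∀ j ∈ V k ∩ V (k + 1),
      x (k + 1) j = ∑ i ∈ V k ∩ V (k + 1), a j i * x k i
        + ∑ i ∈ V k \ V (k + 1), b j i * (x k i - xhat k i))
    (hjoin : ∀ j ∈ V (k + 1) \ V k, x (k + 1) j = xhat (k + 1) j) :
    ∑ j ∈ V (k + 1), x (k + 1) j =
      ∑ j ∈ V k ∩ V (k + 1), x k j
      + ∑ j ∈ V k \ V (k + 1), (x k j - xhat k j)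
      + ∑ j ∈ V (k + 1) \ V k, xhat (k + 1) j := by
  rw [← Finset.sum_inter_add_sum_sdiff (V (k + 1)) (V k), Finset.inter_comm,
    Finset.sum_congr rfl hrem, Finset.sum_congr rfl hjoin, Finset.sum_add_distrib,
    Finset.sum_sum_mul_eq_sum_of_sum_eq_one _ ha, Finset.sum_sum_mul_eq_sum_of_sum_eq_one _ hb]
end

section
/- Consider the OpenRC dynamics with abstract weights a, b : ℕ → Fin n → Fin n → ℝ satisfying, for every k, the column-sum conditions: for every i ∈ R k, ∑_{j ∈ R k} a k j i = 1, and for every i ∈ D k, ∑_{j ∈ R k} b k j i = 1. Assume the state x : ℕ → Fin n → ℝ satisfies, for every k: x (k+1) j = ∑_{i ∈ R k} a k j i · x k i + ∑_{i ∈ D k} b k j i · (x k i − x̂ k i) for j ∈ R k, and x (k+1) j = x̂ (k+1) j for j ∈ J k; and at time 0, x 0 j = x̂ 0 j for every j ∈ V 0. Then for every k ≥ 0, ∑_{j ∈ V k} x k j = ∑_{j ∈ V k} x̂ k j (abstract form of Theorem 1: any mixing weights whose per-sender totals over remaining agents equal 1 preserve the total mass of the active agents). -/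
/-!
Summing the update over the remaining agents and exchanging the order of summation, the
column-sum conditions say that every remaining agent passes on all of its mass and every
departing agent all of its excess `x - xhat` over its joining mass. So the remaining agents
end up with the old total minus the joining masses of the departing agents; the arrivals
bring exactly their joining masses. Hence, if the total mass equals the total joining mass
at one step, it does so at the next.
-/

open Finset

namespace Finset

theorem sum_sum_mul_eq_sum_of_sum_eq_one_s3 {ι R : Type*} [CommSemiring R]
    (s t : Finset ι) (w : ι → ι → R) (y : ι → R) (hw : ∀ i ∈ t, ∑ j ∈ s, w j i = 1) :
    ∑ j ∈ s, ∑ i ∈ t, w j i * y i = ∑ i ∈ t, y i := by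
  rw [sum_comm]
  refine sum_congr rfl fun i hi => ?_
  rw [← sum_mul, hw i hi, one_mul]

end Finset

theorem mass_eq_joining_mass_succ {ι R : Type*} [DecidableEq ι] [CommRing R]
    (S T : Finset ι) (x x' xhat xhat' : ι → R) (a b : ι → ι → R)
    (hxhat : ∀ j ∈ S ∩ T, xhat' j = xhat j)
    (ha : ∀ i ∈ S ∩ T, ∑ j ∈ S ∩ T, a j i = 1)
    (hb : ∀ i ∈ S \ T, ∑ j ∈ S ∩ T, b j i = 1)
    (hrem : ∀ j ∈ S ∩ T,
      x' j = ∑ i ∈ S ∩ T, a j i * x i + ∑ i ∈ S \ T, b j i * (x i - xhat i))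
    (hjoin : ∀ j ∈ T \ S, x' j = xhat' j)
    (hmass : ∑ j ∈ S, x j = ∑ j ∈ S, xhat j) :
    ∑ j ∈ T, x' j = ∑ j ∈ T, xhat' j := by
  have hremaining : ∑ j ∈ S ∩ T, x' j
      = ∑ i ∈ S ∩ T, x i + ∑ i ∈ S \ T, (x i - xhat i) := by
    rw [sum_congr rfl hrem, sum_add_distrib, sum_sum_mul_eq_sum_of_sum_eq_one_s3 _ _ _ _ ha,
      sum_sum_mul_eq_sum_of_sum_eq_one_s3 _ _ _ _ hb]
  have hsplit (f : ι → R) : ∑ j ∈ T, f j = ∑ j ∈ S ∩ T, f j + ∑ j ∈ T \ S, f j := by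
    rw [inter_comm, sum_inter_add_sum_sdiff]
  calc ∑ j ∈ T, x' j
      = ∑ i ∈ S ∩ T, x i + ∑ i ∈ S \ T, (x i - xhat i) + ∑ j ∈ T \ S, xhat' j := by
        rw [hsplit, hremaining, sum_congr rfl hjoin]
    _ = ∑ j ∈ S, x j - ∑ i ∈ S \ T, xhat i + ∑ j ∈ T \ S, xhat' j := by
        rw [← sum_inter_add_sum_sdiff S T x, sum_sub_distrib]
        ring
    _ = ∑ j ∈ S ∩ T, xhat j + ∑ j ∈ T \ S, xhat' j := by
        rw [hmass, ← sum_inter_add_sum_sdiff S T xhat]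
        ring
    _ = ∑ j ∈ T, xhat' j := by
        rw [hsplit, sum_congr rfl hxhat]

/-- Abstract form of Theorem 1 of the OpenRC paper: any mixing weights whose
per-sender totals over the remaining agents equal 1 preserve the total mass of
the active agents. -/
theorem openRC_mass_preservation_abstract {n : ℕ}
    (V : ℕ → Finset (Fin n)) (xhat : ℕ → Fin n → ℝ)
    (x : ℕ → Fin n → ℝ)
    (a b : ℕ → Fin n → Fin n → ℝ)
    -- context: joining masses of remaining agents do not change
    (hxhatR : ∀ k, ∀ j ∈ V k ∩ V (k + 1), xhat (k + 1) j = xhat k j)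
    -- column-sum conditions
    (ha : ∀ k, ∀ i ∈ V k ∩ V (k + 1), ∑ j ∈ V k ∩ V (k + 1), a k j i = 1)
    (hb : ∀ k, ∀ i ∈ V k \ V (k + 1), ∑ j ∈ V k ∩ V (k + 1), b k j i = 1)
    -- the update
    (hrem : ∀ k, ∀ j ∈ V k ∩ V (k + 1),
      x (k + 1) j = ∑ i ∈ V k ∩ V (k + 1), a k j i * x k i
        + ∑ i ∈ V k \ V (k + 1), b k j i * (x k i - xhat k i))
    (hjoin : ∀ k, ∀ j ∈ V (k + 1) \ V k, x (k + 1) j = xhat (k + 1) j)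
    -- initial condition
    (hinit : ∀ j ∈ V 0, x 0 j = xhat 0 j) :
    ∀ k, ∑ j ∈ V k, x k j = ∑ j ∈ V k, xhat k j := by
  intro k
  induction k with
  | zero => exact sum_congr rfl hinit
  | succ k ih =>
    exact mass_eq_joining_mass_succ (V k) (V (k + 1)) (x k) (x (k + 1)) (xhat k) (xhat (k + 1))
      (a k) (b k) (hxhatR k) (ha k) (hb k) (hrem k) (hjoin k) ih
end

section
/- Let N ≥ 1 and let C : Matrix (Fin N) (Fin N) ℝ be column-stochastic (all entries nonnegative and every column sums to 1) and primitive, i.e., there exists m such that all entries of C^m are strictly positive. Let x0, y0 : Fin N → ℝ satisfy ∑_j y0 j = N and ∑_j x0 j = s. Then for every agent j, the ratio (C^k *ᵥ x0) j / (C^k *ᵥ y0) j tends to s / N as k → ∞. (Theorem 2: once the network stabilizes at time k' with N = |V(k')| active agents, total x-mass s = ∑ x̂_ℓ(k'), and total y-mass N — which hold by Theorem 1 — every active agent's ratio z_j(k) = x_j(k)/y_j(k) converges to the average of the joining masses (1/|V(k')|) ∑_{v_ℓ ∈ V(k')} x̂_ℓ(k').) -/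
/-!
Acting on zero-sum vectors, a column-stochastic matrix all of whose entries are at least `δ`
behaves like the matrix with `δ` subtracted from every entry, whose columns sum to
`1 - N δ`; so it contracts the ℓ¹ norm by that factor (Dobrushin). For a primitive `C` this
applies to `C ^ m`, hence `C ^ k u → 0` whenever `∑ u = 0`. Taking `u = x0 - (s / N) y0`, the
numerator is `s / N` times the denominator up to an error tending to `0`, while the denominator
stays bounded away from `0` because `C ^ k y0` is the positive vector `C ^ k 1` up to such an
error.
-/

open Filter Topology Matrix Finset

lemma tendsto_div_of_tendsto_sub_mul {ι : Type*} {l : Filter ι} {a b : ι → ℝ} {c β : ℝ}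
    (hβ : 0 < β) (hb : ∀ᶠ k in l, β ≤ b k) (hab : Tendsto (fun k => a k - c * b k) l (𝓝 0)) :
    Tendsto (fun k => a k / b k) l (𝓝 c) := by
  have hrem : Tendsto (fun k => (a k - c * b k) / b k) l (𝓝 0) := by
    refine squeeze_zero_norm' ?_ (hab.norm.div_const β |>.trans (by simp))
    filter_upwards [hb] with k hk
    rw [norm_div, Real.norm_of_nonneg (hβ.trans_le hk).le]
    exact div_le_div_of_nonneg_left (norm_nonneg _) hβ hk
  refine (hrem.const_add c).congr' ?_ |>.trans (by simp)
  filter_upwards [hb] with k hk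
  have : b k ≠ 0 := (hβ.trans_le hk).ne'
  field_simp
  ring

lemma tendsto_zero_of_antitone_of_le_mul_add {a : ℕ → ℝ} (ha : Antitone a) (h0 : ∀ k, 0 ≤ a k)
    {m : ℕ} {ρ : ℝ} (hρ : ρ < 1) (hcontr : ∀ k, a (k + m) ≤ ρ * a k) :
    Tendsto a atTop (𝓝 0) := by
  have hL := tendsto_atTop_ciInf ha ⟨0, by rintro _ ⟨k, rfl⟩; exact h0 k⟩
  have hle : ⨅ k, a k ≤ ρ * ⨅ k, a k :=
    le_of_tendsto_of_tendsto' ((tendsto_add_atTop_iff_nat m).2 hL) (hL.const_mul ρ) hcontr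
  have hnonneg : 0 ≤ ⨅ k, a k := le_ciInf h0
  have hzero : ⨅ k, a k = 0 := by nlinarith
  rwa [hzero] at hL

namespace Matrix

lemma sum_abs_mulVec_le {m n : Type*} [Fintype m] [Fintype n] {B : Matrix m n ℝ}
    (hB : ∀ i j, 0 ≤ B i j) (v : n → ℝ) :
    ∑ i, |(B *ᵥ v) i| ≤ ∑ j, (∑ i, B i j) * |v j| := by
  calc ∑ i, |(B *ᵥ v) i| ≤ ∑ i, ∑ j, |B i j * v j| :=
        sum_le_sum fun i _ => abs_sum_le_sum_abs _ _
    _ = ∑ j, (∑ i, B i j) * |v j| := by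
        rw [sum_comm]
        simp only [abs_mul, abs_of_nonneg (hB _ _), sum_mul]

variable {n : Type*} [Fintype n] [DecidableEq n] {A : Matrix n n ℝ}

lemma sum_abs_mulVec_le_of_mem_colStochastic (hA : A ∈ colStochastic ℝ n) (v : n → ℝ) :
    ∑ i, |(A *ᵥ v) i| ≤ ∑ i, |v i| := by
  simpa [sum_col_of_mem_colStochastic hA] using sum_abs_mulVec_le (fun i j => hA.1 i j) v

lemma sum_abs_mulVec_le_of_sum_eq_zero (hA : A ∈ colStochastic ℝ n) {δ : ℝ}
    (hδ : ∀ i j, δ ≤ A i j) {v : n → ℝ} (hv : ∑ i, v i = 0) :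
    ∑ i, |(A *ᵥ v) i| ≤ (1 - Fintype.card n * δ) * ∑ i, |v i| := by
  have hshift : (A - of fun _ _ => δ) *ᵥ v = A *ᵥ v := by
    ext i
    simp [mulVec, dotProduct, sub_mul, sum_sub_distrib, ← mul_sum, hv]
  have := sum_abs_mulVec_le (B := A - of fun _ _ => δ) (fun i j => by simpa using hδ i j) v
  simpa [hshift, sum_sub_distrib, sum_col_of_mem_colStochastic hA, mul_sum] using this

lemma exists_pos_le_pow_apply {B : Matrix n n ℝ} (hprim : ∃ m, ∀ i j, 0 < (B ^ m) i j) :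
    ∃ m, ∃ δ > 0, ∀ i j, δ ≤ (B ^ m) i j := by
  obtain ⟨m, hm⟩ := hprim
  refine ⟨m, ?_⟩
  cases isEmpty_or_nonempty n
  · exact ⟨1, one_pos, fun i => isEmptyElim i⟩
  · obtain ⟨p, hp⟩ := Finite.exists_min fun p : n × n => (B ^ m) p.1 p.2
    exact ⟨_, hm p.1 p.2, fun i j => hp (i, j)⟩

variable {m : ℕ} {δ : ℝ}

lemma tendsto_pow_mulVec_of_sum_eq_zero [Nonempty n] (hA : A ∈ colStochastic ℝ n)
    (hAm : ∀ i j, δ ≤ (A ^ m) i j) (hδ : 0 < δ) {v : n → ℝ} (hv : ∑ i, v i = 0) :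
    Tendsto (fun k => A ^ k *ᵥ v) atTop (𝓝 0) := by
  have hsum : ∀ k, ∑ i, (A ^ k *ᵥ v) i = 0 := fun k => by
    rw [sum_mulVec_of_mem_colStochastic (pow_mem hA k), hv]
  have hl1 : Tendsto (fun k => ∑ i, |(A ^ k *ᵥ v) i|) atTop (𝓝 0) := by
    refine tendsto_zero_of_antitone_of_le_mul_add (m := m) (ρ := 1 - Fintype.card n * δ) ?_
      (fun k => sum_nonneg fun i _ => abs_nonneg _)
      (sub_lt_self _ (mul_pos (Nat.cast_pos.2 Fintype.card_pos) hδ)) ?_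
    · refine antitone_nat_of_succ_le fun k => ?_
      rw [pow_succ', ← mulVec_mulVec]
      exact sum_abs_mulVec_le_of_mem_colStochastic hA _
    · intro k
      rw [add_comm, pow_add, ← mulVec_mulVec]
      exact sum_abs_mulVec_le_of_sum_eq_zero (pow_mem hA m) hAm (hsum k)
  refine tendsto_pi_nhds.2 fun j => squeeze_zero_norm (fun k => ?_) hl1
  exact single_le_sum (f := fun i => |(A ^ k *ᵥ v) i|) (fun i _ => abs_nonneg _) (mem_univ j)

lemma mul_sum_le_pow_mulVec_apply (hA : A ∈ colStochastic ℝ n) (hAm : ∀ i j, δ ≤ (A ^ m) i j)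
    {k : ℕ} (hmk : m ≤ k) {w : n → ℝ} (hw : 0 ≤ w) (j : n) :
    δ * ∑ i, w i ≤ (A ^ k *ᵥ w) j := by
  obtain ⟨r, rfl⟩ := Nat.exists_eq_add_of_le hmk
  rw [pow_add, ← mulVec_mulVec, ← sum_mulVec_of_mem_colStochastic (pow_mem hA r), mul_sum]
  exact sum_le_sum fun i _ =>
    mul_le_mul_of_nonneg_right (hAm j i) (nonneg_mulVec_of_mem_colStochastic (pow_mem hA r) hw i)

lemma eventually_lt_pow_mulVec_apply [Nonempty n] (hA : A ∈ colStochastic ℝ n)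
    (hAm : ∀ i j, δ ≤ (A ^ m) i j) (hδ : 0 < δ) {y : n → ℝ} (hy : 0 ≤ ∑ i, y i)
    {β : ℝ} (hβ : β < δ * ∑ i, y i) (j : n) : ∀ᶠ k in atTop, β < (A ^ k *ᵥ y) j := by
  set c := (∑ i, y i) / Fintype.card n
  have hcard : (Fintype.card n : ℝ) ≠ 0 := Nat.cast_ne_zero.2 Fintype.card_ne_zero
  have hzero : ∑ i, (y - Function.const n c) i = 0 := by
    simp [c, sum_sub_distrib, mul_div_cancel₀ _ hcard]
  have hconst : ∀ k, m ≤ k → δ * ∑ i, y i ≤ (A ^ k *ᵥ Function.const n c) j := fun k hk => by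
    simpa [c, mul_div_cancel₀ _ hcard] using mul_sum_le_pow_mulVec_apply hA hAm hk
      (w := Function.const n c) (fun _ => div_nonneg hy (Nat.cast_nonneg _)) j
  have hrest := tendsto_pi_nhds.1 (tendsto_pow_mulVec_of_sum_eq_zero hA hAm hδ hzero) j
  filter_upwards [eventually_ge_atTop m, hrest.eventually_const_lt (sub_neg.2 hβ)] with k hk hk'
  have := hconst k hk
  simp only [mulVec_sub, Pi.sub_apply] at hk'
  linarith

end Matrix

theorem openRC_ratio_convergence_stabilized_general {N : ℕ}
    (C : Matrix (Fin N) (Fin N) ℝ)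
    (hnonneg : ∀ i j, 0 ≤ C i j)
    (hcol : ∀ i, ∑ j, C j i = 1)
    (hprim : ∃ m, ∀ i j, 0 < (C ^ m) i j)
    (x0 y0 : Fin N → ℝ) (s : ℝ)
    (hy0 : ∑ j, y0 j = (N : ℝ)) (hx0 : ∑ j, x0 j = s) :
    ∀ j, Tendsto (fun k => (C ^ k *ᵥ x0) j / (C ^ k *ᵥ y0) j)
      atTop (nhds (s / (N : ℝ))) := by
  intro j
  have : Nonempty (Fin N) := ⟨j⟩
  have hN : (0 : ℝ) < N := Nat.cast_pos.2 j.pos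
  have hC : C ∈ colStochastic ℝ (Fin N) := mem_colStochastic_iff_sum.2 ⟨hnonneg, hcol⟩
  obtain ⟨m, δ, hδ, hCm⟩ := exists_pos_le_pow_apply hprim
  have hden : ∀ᶠ k in atTop, δ * N / 2 ≤ (C ^ k *ᵥ y0) j :=
    (eventually_lt_pow_mulVec_apply hC hCm hδ (hy0 ▸ hN.le)
      (by rw [hy0]; linarith [mul_pos hδ hN]) j).mono fun _ => le_of_lt
  have hzero : ∑ i, (x0 - (s / N) • y0) i = 0 := by
    simp [sum_sub_distrib, ← mul_sum, hx0, hy0, hN.ne']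
  refine tendsto_div_of_tendsto_sub_mul (by positivity) hden ?_
  simpa [mulVec_sub, mulVec_smul] using
    tendsto_pi_nhds.1 (tendsto_pow_mulVec_of_sum_eq_zero hC hCm hδ hzero) j

/-- Theorem 2 of the OpenRC paper: once the network stabilizes with `N` active
agents, total x-mass `s` and total y-mass `N`, and the (column-stochastic,
primitive) weight matrix `C` drives the dynamics, every agent's ratio
converges to `s / N`, the average of the joining masses. -/
theorem openRC_ratio_convergence_stabilized {N : ℕ} (hN : 1 ≤ N)
    (C : Matrix (Fin N) (Fin N) ℝ)
    (hnonneg : ∀ i j, 0 ≤ C i j)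
    (hcol : ∀ i, ∑ j, C j i = 1)
    (hprim : ∃ m, ∀ i j, 0 < (C ^ m) i j)
    (x0 y0 : Fin N → ℝ) (s : ℝ)
    (hy0 : ∑ j, y0 j = (N : ℝ)) (hx0 : ∑ j, x0 j = s) :
    ∀ j, Tendsto (fun k => (C ^ k *ᵥ x0) j / (C ^ k *ᵥ y0) j)
      atTop (nhds (s / (N : ℝ))) :=
  openRC_ratio_convergence_stabilized_general C hnonneg hcol hprim x0 y0 s hy0 hx0
end

section
/- Let N ≥ 1 and let C : Matrix (Fin N) (Fin N) ℝ be column-stochastic (all entries nonnegative and every column sums to 1) and primitive, i.e., there exists m such that all entries of C^m are strictly positive. Let x0, y0 : Fin N → ℝ with ∑_j y0 j > 0. Then for every index j, the ratio (C^k *ᵥ x0) j / (C^k *ᵥ y0) j tends to (∑_j x0 j) / (∑_j y0 j) as k → ∞ (the ratio-consensus convergence result for column-stochastic primitive matrices invoked in the proof of Theorem 2). -/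
/-!
Let `r k` be row `j` of `C ^ k`, so that `r (k + 1) = r k ᵥ* C`. Since `C` is column-stochastic,
each entry of `r (k + 1)` is a convex combination of the entries of `r k`: the maximum of `r k`
decreases and its minimum increases. Once `δ ≤ C ^ m` entrywise with `δ > 0`, every block of `m`
steps gives the minimum weight at least `δ`, shrinking the gap between maximum and minimum by the
factor `1 - δ`. Hence `r k` tends to a constant vector with value `c > 0`, so
`(C ^ k *ᵥ x) j = r k ⬝ᵥ x` tends to `c * ∑ i, x i`, and the `c` cancels in the ratio.
-/

open Filter Matrix Topology

theorem exists_tendsto_of_monotone_of_antitone_of_contract {lo hi : ℕ → ℝ} (hlo : Monotone lo)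
    (hhi : Antitone hi) (hle : ∀ k, lo k ≤ hi k) {δ : ℝ} (hδ : 0 < δ) (m : ℕ)
    (hcontr : ∀ k, hi (k + m) ≤ hi k - δ * (hi k - lo k)) :
    ∃ c, Tendsto lo atTop (𝓝 c) ∧ Tendsto hi atTop (𝓝 c) := by
  set L := ⨆ k, lo k
  set H := ⨅ k, hi k
  have hL : Tendsto lo atTop (𝓝 L) := tendsto_atTop_ciSup hlo
    ⟨hi 0, Set.forall_mem_range.2 fun k => (hle k).trans (hhi k.zero_le)⟩
  have hH : Tendsto hi atTop (𝓝 H) := tendsto_atTop_ciInf hhi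
    ⟨lo 0, Set.forall_mem_range.2 fun k => (hlo k.zero_le).trans (hle k)⟩
  have hLH : L ≤ H := le_of_tendsto_of_tendsto' hL hH hle
  have hHL : H ≤ H - δ * (H - L) := le_of_tendsto_of_tendsto'
    (hH.comp (tendsto_add_atTop_nat m)) (hH.sub ((hH.sub hL).const_mul δ)) hcontr
  have hHeq : H = L := by nlinarith
  exact ⟨L, hL, hHeq ▸ hH⟩

namespace Matrix

variable {ι : Type*} [Fintype ι] [DecidableEq ι] {M : Matrix ι ι ℝ}

theorem iInf_le_vecMul_apply (hM : M ∈ colStochastic ℝ ι) (v : ι → ℝ) (i : ι) :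
    ⨅ l, v l ≤ (v ᵥ* M) i :=
  calc ⨅ l, v l = ∑ l, (⨅ l, v l) * M l i := by
        rw [← Finset.mul_sum, sum_col_of_mem_colStochastic hM, mul_one]
    _ ≤ ∑ l, v l * M l i := Finset.sum_le_sum fun l _ =>
        mul_le_mul_of_nonneg_right (ciInf_le (Finite.bddBelow_range v) l)
          (nonneg_of_mem_colStochastic hM)

theorem vecMul_apply_le_iSup_sub (hM : M ∈ colStochastic ℝ ι) {δ : ℝ} (hδ : ∀ l i, δ ≤ M l i)
    (v : ι → ℝ) (i : ι) :
    (v ᵥ* M) i ≤ (⨆ l, v l) - δ * ((⨆ l, v l) - ⨅ l, v l) := by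
  have : Nonempty ι := ⟨i⟩
  obtain ⟨l₀, hl₀⟩ := exists_eq_ciInf_of_finite (f := v)
  set hi := ⨆ l, v l
  have le_hi (l : ι) : v l ≤ hi := le_ciSup (Finite.bddAbove_range v) l
  have hgap : (hi - v l₀) * M l₀ i ≤ ∑ l, (hi - v l) * M l i :=
    Finset.single_le_sum (f := fun l => (hi - v l) * M l i)
      (fun l _ => mul_nonneg (sub_nonneg.2 (le_hi l)) (nonneg_of_mem_colStochastic hM))
      (Finset.mem_univ l₀)
  calc (v ᵥ* M) i = hi - ∑ l, (hi - v l) * M l i := by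
        simp only [vecMul, dotProduct, sub_mul, Finset.sum_sub_distrib, ← Finset.mul_sum,
          sum_col_of_mem_colStochastic hM, mul_one, sub_sub_cancel]
    _ ≤ hi - (hi - v l₀) * M l₀ i := sub_le_sub_left hgap hi
    _ ≤ hi - δ * (hi - v l₀) := by
        rw [mul_comm δ]
        exact sub_le_sub_left (mul_le_mul_of_nonneg_left (hδ l₀ i) (sub_nonneg.2 (le_hi l₀))) hi
    _ = hi - δ * (hi - ⨅ l, v l) := by rw [hl₀]

theorem vecMul_apply_le_iSup (hM : M ∈ colStochastic ℝ ι) (v : ι → ℝ) (i : ι) :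
    (v ᵥ* M) i ≤ ⨆ l, v l := by
  simpa using vecMul_apply_le_iSup_sub hM (fun _ _ => nonneg_of_mem_colStochastic hM) v i

theorem exists_tendsto_vecMul_pow [Nonempty ι] (hM : M ∈ colStochastic ℝ ι) {m : ℕ}
    (hm : ∀ i j, 0 < (M ^ m) i j) (v : ι → ℝ) :
    ∃ c, (∀ k, ⨅ i, (v ᵥ* M ^ k) i ≤ c) ∧
      Tendsto (fun k => v ᵥ* M ^ k) atTop (𝓝 fun _ => c) := by
  obtain ⟨p, hp⟩ := Finite.exists_min fun p : ι × ι => (M ^ m) p.1 p.2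
  set lo := fun k => ⨅ i, (v ᵥ* M ^ k) i
  set hi := fun k => ⨆ i, (v ᵥ* M ^ k) i
  have hlo : Monotone lo := monotone_nat_of_le_succ fun k => le_ciInf fun i => by
    simpa [pow_succ, ← vecMul_vecMul] using iInf_le_vecMul_apply hM (v ᵥ* M ^ k) i
  have hhi : Antitone hi := antitone_nat_of_succ_le fun k => ciSup_le fun i => by
    simpa [pow_succ, ← vecMul_vecMul] using vecMul_apply_le_iSup hM (v ᵥ* M ^ k) i
  have hle (k : ℕ) : lo k ≤ hi k :=
    (ciInf_le (Finite.bddBelow_range _) (Classical.arbitrary ι)).trans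
      (le_ciSup (Finite.bddAbove_range _) _)
  have hcontr (k : ℕ) : hi (k + m) ≤ hi k - (M ^ m) p.1 p.2 * (hi k - lo k) :=
    ciSup_le fun i => by
      simpa [pow_add, ← vecMul_vecMul] using
        vecMul_apply_le_iSup_sub (pow_mem hM m) (fun l i => hp (l, i)) (v ᵥ* M ^ k) i
  obtain ⟨c, hlo_c, hhi_c⟩ :=
    exists_tendsto_of_monotone_of_antitone_of_contract hlo hhi hle (hm p.1 p.2) m hcontr
  refine ⟨c, hlo.ge_of_tendsto hlo_c, tendsto_pi_nhds.2 fun i => ?_⟩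
  exact tendsto_of_tendsto_of_tendsto_of_le_of_le hlo_c hhi_c
    (fun k => ciInf_le (Finite.bddBelow_range _) i) (fun k => le_ciSup (Finite.bddAbove_range _) i)

theorem exists_pos_tendsto_pow_apply (hM : M ∈ colStochastic ℝ ι) {m : ℕ}
    (hm : ∀ i j, 0 < (M ^ m) i j) (j : ι) :
    ∃ c, 0 < c ∧ Tendsto (fun k => (M ^ k) j) atTop (𝓝 fun _ => c) := by
  have : Nonempty ι := ⟨j⟩
  obtain ⟨c, hc, hlim⟩ := exists_tendsto_vecMul_pow hM hm (Pi.single j 1)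
  obtain ⟨i, hi⟩ := exists_eq_ciInf_of_finite (f := fun i => (Pi.single j 1 ᵥ* M ^ m) i)
  have hpos : 0 < ⨅ i, (Pi.single j 1 ᵥ* M ^ m) i := by
    rw [← hi]
    simpa using hm j i
  exact ⟨c, hpos.trans_le (hc m), by simpa only [single_vecMul, one_smul, row_apply'] using hlim⟩

end Matrix

theorem ratio_consensus_convergence_general {N : ℕ}
    (C : Matrix (Fin N) (Fin N) ℝ)
    (hnonneg : ∀ i j, 0 ≤ C i j)
    (hcol : ∀ i, ∑ j, C j i = 1)
    (hprim : ∃ m, ∀ i j, 0 < (C ^ m) i j)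
    (x0 y0 : Fin N → ℝ)
    (hy0 : 0 < ∑ j, y0 j) :
    ∀ j, Tendsto (fun k => (C ^ k *ᵥ x0) j / (C ^ k *ᵥ y0) j)
      atTop (nhds ((∑ j, x0 j) / (∑ j, y0 j))) := by
  intro j
  obtain ⟨m, hm⟩ := hprim
  obtain ⟨c, hc, hrow⟩ :=
    exists_pos_tendsto_pow_apply (mem_colStochastic_iff_sum.2 ⟨hnonneg, hcol⟩) hm j
  have hlim (x : Fin N → ℝ) : Tendsto (fun k => (C ^ k *ᵥ x) j) atTop (𝓝 (c * ∑ i, x i)) := by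
    have h := ((continuous_id.dotProduct (continuous_const : Continuous fun _ => x)).tendsto
      fun _ : Fin N => c).comp hrow
    simpa [mulVec, dotProduct, Finset.mul_sum, Function.comp_def] using h
  rw [← mul_div_mul_left _ _ hc.ne']
  exact (hlim x0).div (hlim y0) (mul_pos hc hy0).ne'

/-- Ratio-consensus convergence for column-stochastic primitive matrices,
as invoked in the proof of Theorem 2 of the OpenRC paper: every entry of the
ratio of the two linear iterations converges to the ratio of the initial sums. -/
theorem ratio_consensus_convergence {N : ℕ} (hN : 1 ≤ N)
    (C : Matrix (Fin N) (Fin N) ℝ)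
    (hnonneg : ∀ i j, 0 ≤ C i j)
    (hcol : ∀ i, ∑ j, C j i = 1)
    (hprim : ∃ m, ∀ i j, 0 < (C ^ m) i j)
    (x0 y0 : Fin N → ℝ)
    (hy0 : 0 < ∑ j, y0 j) :
    ∀ j, Tendsto (fun k => (C ^ k *ᵥ x0) j / (C ^ k *ᵥ y0) j)
      atTop (nhds ((∑ j, x0 j) / (∑ j, y0 j))) :=
  ratio_consensus_convergence_general C hnonneg hcol hprim x0 y0 hy0
end

section
/- Let N ≥ 1 and let C : Matrix (Fin N) (Fin N) ℝ be column-stochastic (all entries nonnegative and every column sums to 1) and primitive, i.e., there exists m such that all entries of C^m are strictly positive. Then there exists a vector v : Fin N → ℝ with v i > 0 for all i, ∑_i v i = 1, and C *ᵥ v = v, such that the matrix powers C^k converge as k → ∞ to the rank-one matrix whose (i, j) entry is v i (i.e., to v · 1ᵀ). (The Perron–Frobenius limit underlying the convergence of ratio consensus for primitive column-stochastic matrices.) -/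
open Filter Matrix

open Finset
namespace PFAux

variable {N : ℕ}

lemma pow_nonneg' {C : Matrix (Fin N) (Fin N) ℝ} (h : ∀ i j, 0 ≤ C i j) (k : ℕ) :
    ∀ i j, 0 ≤ (C ^ k) i j := by
  induction k with
  | zero =>
    intro i j
    rw [pow_zero, Matrix.one_apply]
    split <;> norm_num
  | succ k ih =>
    intro i j
    rw [pow_succ, Matrix.mul_apply]
    exact Finset.sum_nonneg fun l _ => mul_nonneg (ih i l) (h l j)

lemma pow_colsum {C : Matrix (Fin N) (Fin N) ℝ} (h : ∀ i, ∑ j, C j i = 1) (k : ℕ) :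
    ∀ i, ∑ j, (C ^ k) j i = 1 := by
  induction k with
  | zero =>
    intro i
    simp [Matrix.one_apply]
  | succ k ih =>
    intro i
    calc ∑ j, (C ^ (k + 1)) j i = ∑ j, ∑ l, (C ^ k) j l * C l i := by
          simp [pow_succ, Matrix.mul_apply]
    _ = ∑ l, (∑ j, (C ^ k) j l) * C l i := by
          rw [Finset.sum_comm]; simp [Finset.sum_mul]
    _ = ∑ l, C l i := by simp [ih]
    _ = 1 := h i

lemma pow_entry_le_one {C : Matrix (Fin N) (Fin N) ℝ} (h0 : ∀ i j, 0 ≤ C i j)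
    (h : ∀ i, ∑ j, C j i = 1) (k : ℕ) (i j : Fin N) : (C ^ k) i j ≤ 1 := by
  have := pow_colsum h k j
  calc (C ^ k) i j ≤ ∑ l, (C ^ k) l j :=
    Finset.single_le_sum (fun l _ => pow_nonneg' h0 k l j) (Finset.mem_univ i)
  _ = 1 := this

variable [NeZero N]

noncomputable def rmin (A : Matrix (Fin N) (Fin N) ℝ) (i : Fin N) : ℝ :=
  Finset.univ.inf' Finset.univ_nonempty (fun j => A i j)

noncomputable def rmax (A : Matrix (Fin N) (Fin N) ℝ) (i : Fin N) : ℝ :=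
  Finset.univ.sup' Finset.univ_nonempty (fun j => A i j)

lemma rmin_le (A : Matrix (Fin N) (Fin N) ℝ) (i j : Fin N) : rmin A i ≤ A i j :=
  Finset.inf'_le _ (Finset.mem_univ j)

lemma le_rmax (A : Matrix (Fin N) (Fin N) ℝ) (i j : Fin N) : A i j ≤ rmax A i :=
  Finset.le_sup' _ (Finset.mem_univ j)

lemma rmin_le_rmax (A : Matrix (Fin N) (Fin N) ℝ) (i : Fin N) : rmin A i ≤ rmax A i :=
  (rmin_le A i (Classical.arbitrary _)).trans (le_rmax A i _)

lemma mul_mem_Icc {A S : Matrix (Fin N) (Fin N) ℝ}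
    (hS0 : ∀ i j, 0 ≤ S i j) (hS1 : ∀ j, ∑ l, S l j = 1) (i j : Fin N) :
    rmin A i ≤ (A * S) i j ∧ (A * S) i j ≤ rmax A i := by
  constructor
  · calc rmin A i = ∑ l, rmin A i * S l j := by rw [← Finset.mul_sum, hS1, mul_one]
    _ ≤ ∑ l, A i l * S l j :=
        Finset.sum_le_sum fun l _ => mul_le_mul_of_nonneg_right (rmin_le A i l) (hS0 l j)
    _ = (A * S) i j := (Matrix.mul_apply).symm
  · calc (A * S) i j = ∑ l, A i l * S l j := Matrix.mul_apply
    _ ≤ ∑ l, rmax A i * S l j :=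
        Finset.sum_le_sum fun l _ => mul_le_mul_of_nonneg_right (le_rmax A i l) (hS0 l j)
    _ = rmax A i := by rw [← Finset.mul_sum, hS1, mul_one]

lemma contract {A S : Matrix (Fin N) (Fin N) ℝ} {δ : ℝ}
    (hSδ : ∀ i j, δ ≤ S i j) (hS1 : ∀ j, ∑ l, S l j = 1) (i : Fin N) :
    rmax (A * S) i - rmin (A * S) i ≤ (1 - N * δ) * (rmax A i - rmin A i) := by
  have key : ∀ j j', (A * S) i j - (A * S) i j' ≤ (1 - N * δ) * (rmax A i - rmin A i) := by
    intro j j'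
    have h1 : (A * S) i j - (A * S) i j'
        = ∑ l, (A i l - rmin A i) * (S l j - S l j') := by
      simp only [Matrix.mul_apply, sub_mul, mul_sub, Finset.sum_sub_distrib,
        ← Finset.mul_sum, hS1]
      ring
    have h2 : ∑ l, (A i l - rmin A i) * (S l j - S l j')
        ≤ ∑ l, (A i l - rmin A i) * (S l j - δ) :=
      Finset.sum_le_sum fun l _ => mul_le_mul_of_nonneg_left
        (sub_le_sub_left (hSδ l j') _) (sub_nonneg.2 (rmin_le A i l))
    have h3 : ∑ l, (A i l - rmin A i) * (S l j - δ)
        ≤ ∑ l, (rmax A i - rmin A i) * (S l j - δ) :=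
      Finset.sum_le_sum fun l _ => mul_le_mul_of_nonneg_right
        (sub_le_sub_right (le_rmax A i l) _) (sub_nonneg.2 (hSδ l j))
    have h4 : ∑ l, (rmax A i - rmin A i) * (S l j - δ)
        = (rmax A i - rmin A i) * (1 - N * δ) := by
      rw [← Finset.mul_sum, Finset.sum_sub_distrib, hS1, Finset.sum_const,
        Finset.card_univ, Fintype.card_fin, nsmul_eq_mul]
    rw [h1]
    calc _ ≤ _ := h2
    _ ≤ _ := h3
    _ = _ := h4
    _ = (1 - N * δ) * (rmax A i - rmin A i) := by ring
  obtain ⟨j, _, hj⟩ := Finset.exists_mem_eq_sup' (Finset.univ_nonempty) (fun j => (A * S) i j)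
  obtain ⟨j', _, hj'⟩ := Finset.exists_mem_eq_inf' (Finset.univ_nonempty) (fun j => (A * S) i j)
  rw [rmax, rmin, hj, hj']
  exact key j j'

end PFAux

open PFAux

open PFAux

/-- The Perron–Frobenius limit underlying ratio consensus for primitive
column-stochastic matrices: the powers `C ^ k` converge (entrywise) to the
rank-one matrix `v · 1ᵀ`, where `v` is the positive stationary vector of `C`
with entries summing to 1. -/
theorem perron_frobenius_limit_column_stochastic {N : ℕ} (hN : 1 ≤ N)
    (C : Matrix (Fin N) (Fin N) ℝ)
    (hnonneg : ∀ i j, 0 ≤ C i j)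
    (hcol : ∀ i, ∑ j, C j i = 1)
    (hprim : ∃ m, ∀ i j, 0 < (C ^ m) i j) :
    ∃ v : Fin N → ℝ, (∀ i, 0 < v i) ∧ (∑ i, v i = 1) ∧ C *ᵥ v = v ∧
      Tendsto (fun k => C ^ k) atTop
        (nhds (Matrix.of fun i _ : Fin N => v i)) := by
  haveI : NeZero N := ⟨by omega⟩
  -- normalize primitivity exponent to be positive
  obtain ⟨m, hm1, hm⟩ : ∃ m, 1 ≤ m ∧ ∀ i j, 0 < (C ^ m) i j := by
    obtain ⟨m₀, hm₀⟩ := hprim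
    rcases Nat.eq_zero_or_pos m₀ with h0 | h0
    · subst h0
      have hsub : ∀ i j : Fin N, i = j := by
        intro i j
        by_contra hne
        have := hm₀ i j
        rw [pow_zero, Matrix.one_apply_ne hne] at this
        exact lt_irrefl 0 this
      refine ⟨1, le_refl 1, fun i j => ?_⟩
      rw [pow_one]
      have hij : i = j := hsub i j
      subst hij
      have h1 : ∑ l, C l i = 1 := hcol i
      have h2 : ∑ l, C l i = C i i :=
        Fintype.sum_eq_single i fun l hl => absurd (hsub l i) hl
      rw [h2] at h1
      rw [h1]
      norm_num
    · exact ⟨m₀, h0, hm₀⟩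
  have hP1 : ∀ j, ∑ l, (C ^ m) l j = 1 := pow_colsum hcol m
  set δ : ℝ := Finset.univ.inf' Finset.univ_nonempty
    (fun p : Fin N × Fin N => (C ^ m) p.1 p.2) with hδ
  have hδle : ∀ i j, δ ≤ (C ^ m) i j := fun i j =>
    Finset.inf'_le _ (Finset.mem_univ (i, j))
  have hδpos : 0 < δ := (Finset.lt_inf'_iff _).2 fun p _ => hm p.1 p.2
  set c : ℝ := 1 - (N : ℝ) * δ with hc
  have hNpos : (0 : ℝ) < N := by exact_mod_cast Nat.lt_of_lt_of_le Nat.zero_lt_one hN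
  have hc0 : 0 ≤ c := by
    have key : (N : ℝ) * δ ≤ 1 := by
      have j0 : Fin N := Classical.arbitrary _
      calc (N : ℝ) * δ = ∑ _l : Fin N, δ := by
            rw [Finset.sum_const, Finset.card_univ, Fintype.card_fin, nsmul_eq_mul]
      _ ≤ ∑ l, (C ^ m) l j0 := Finset.sum_le_sum fun l _ => hδle l j0
      _ = 1 := hP1 j0
    simp only [hc]; linarith
  have hc1 : c < 1 := by
    have : 0 < (N : ℝ) * δ := mul_pos hNpos hδpos
    simp only [hc]; linarith
  -- monotonicity of row extrema
  have hmin_mono : ∀ i, Monotone fun k => rmin (C ^ k) i := by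
    intro i
    apply monotone_nat_of_le_succ
    intro k
    rw [pow_succ]
    exact Finset.le_inf' _ _ fun j _ => (mul_mem_Icc hnonneg hcol i j).1
  have hmax_anti : ∀ i, Antitone fun k => rmax (C ^ k) i := by
    intro i
    apply antitone_nat_of_succ_le
    intro k
    rw [pow_succ]
    exact Finset.sup'_le _ _ fun j _ => (mul_mem_Icc hnonneg hcol i j).2
  have hosc_nonneg : ∀ k i, 0 ≤ rmax (C ^ k) i - rmin (C ^ k) i :=
    fun k i => sub_nonneg.2 (rmin_le_rmax _ _)
  have hosc_anti : ∀ i, Antitone fun k => rmax (C ^ k) i - rmin (C ^ k) i := by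
    intro i
    intro a b hab
    have h1 := hmax_anti i hab
    have h2 := hmin_mono i hab
    simp only at h1 h2 ⊢
    linarith
  have hosc_le_one : ∀ k i, rmax (C ^ k) i - rmin (C ^ k) i ≤ 1 := by
    intro k i
    have h1 : rmax (C ^ k) i ≤ 1 :=
      Finset.sup'_le _ _ fun j _ => pow_entry_le_one hnonneg hcol k i j
    have h2 : 0 ≤ rmin (C ^ k) i :=
      Finset.le_inf' _ _ fun j _ => pow_nonneg' hnonneg k i j
    linarith
  have hstep : ∀ k i, rmax (C ^ (k + m)) i - rmin (C ^ (k + m)) i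
      ≤ c * (rmax (C ^ k) i - rmin (C ^ k) i) := by
    intro k i
    rw [pow_add]
    exact contract hδle hP1 i
  have hgeo : ∀ q i, rmax (C ^ (q * m)) i - rmin (C ^ (q * m)) i ≤ c ^ q := by
    intro q
    induction q with
    | zero => intro i; simpa using hosc_le_one 0 i
    | succ q ih =>
      intro i
      have h1 : (q + 1) * m = q * m + m := by ring
      rw [h1]
      calc rmax (C ^ (q * m + m)) i - rmin (C ^ (q * m + m)) i
          ≤ c * (rmax (C ^ (q * m)) i - rmin (C ^ (q * m)) i) := hstep _ i
      _ ≤ c * c ^ q := mul_le_mul_of_nonneg_left (ih i) hc0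
      _ = c ^ (q + 1) := by ring
  have hosc0 : ∀ i, Tendsto (fun k => rmax (C ^ k) i - rmin (C ^ k) i) atTop (nhds 0) := by
    intro i
    have hdiv : Tendsto (fun k : ℕ => k / m) atTop atTop := by
      apply Filter.tendsto_atTop_atTop.2
      intro b
      exact ⟨b * m, fun k hk => (Nat.le_div_iff_mul_le (by omega)).2 hk⟩
    have hpow : Tendsto (fun k : ℕ => c ^ (k / m)) atTop (nhds 0) :=
      (tendsto_pow_atTop_nhds_zero_of_lt_one hc0 hc1).comp hdiv
    refine tendsto_of_tendsto_of_tendsto_of_le_of_le tendsto_const_nhds hpow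
      (fun k => hosc_nonneg k i) (fun k => ?_)
    calc rmax (C ^ k) i - rmin (C ^ k) i
        ≤ rmax (C ^ (k / m * m)) i - rmin (C ^ (k / m * m)) i :=
          hosc_anti i (Nat.div_mul_le_self k m)
    _ ≤ c ^ (k / m) := hgeo _ i
  have hbdd : ∀ i, BddAbove (Set.range fun k => rmin (C ^ k) i) := by
    intro i
    refine ⟨1, ?_⟩
    rintro x ⟨k, rfl⟩
    exact (rmin_le _ i (Classical.arbitrary _)).trans
      (pow_entry_le_one hnonneg hcol k i _)
  set v : Fin N → ℝ := fun i => ⨆ k, rmin (C ^ k) i with hv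
  have htmin : ∀ i, Tendsto (fun k => rmin (C ^ k) i) atTop (nhds (v i)) :=
    fun i => tendsto_atTop_ciSup (hmin_mono i) (hbdd i)
  have htmax : ∀ i, Tendsto (fun k => rmax (C ^ k) i) atTop (nhds (v i)) := by
    intro i
    have h := (htmin i).add (hosc0 i)
    simpa using h
  have hent : ∀ i j, Tendsto (fun k => (C ^ k) i j) atTop (nhds (v i)) := fun i j =>
    tendsto_of_tendsto_of_tendsto_of_le_of_le (htmin i) (htmax i)
      (fun k => rmin_le _ i j) (fun k => le_rmax _ i j)
  have hvpos : ∀ i, 0 < v i := by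
    intro i
    have h1 : δ ≤ rmin (C ^ m) i := Finset.le_inf' _ _ fun j _ => hδle i j
    have h2 : rmin (C ^ m) i ≤ v i := le_ciSup (hbdd i) m
    linarith
  have j0 : Fin N := Classical.arbitrary _
  have hsum : ∑ i, v i = 1 := by
    have h1 : Tendsto (fun k => ∑ i, (C ^ k) i j0) atTop (nhds (∑ i, v i)) :=
      tendsto_finset_sum _ fun i _ => hent i j0
    have h2 : (fun k => ∑ i, (C ^ k) i j0) = fun _ => (1 : ℝ) :=
      funext fun k => pow_colsum hcol k j0
    rw [h2] at h1
    exact tendsto_nhds_unique h1 tendsto_const_nhds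
  have hfix : C *ᵥ v = v := by
    funext i
    have h1 : Tendsto (fun k => (C ^ (k + 1)) i j0) atTop (nhds (v i)) :=
      (hent i j0).comp (tendsto_add_atTop_nat 1)
    have h2 : (fun k => (C ^ (k + 1)) i j0) = fun k => ∑ l, C i l * (C ^ k) l j0 := by
      funext k
      rw [pow_succ', Matrix.mul_apply]
    have h3 : Tendsto (fun k => ∑ l, C i l * (C ^ k) l j0) atTop
        (nhds (∑ l, C i l * v l)) :=
      tendsto_finset_sum _ fun l _ => tendsto_const_nhds.mul (hent l j0)
    rw [h2] at h1
    have h4 := tendsto_nhds_unique h3 h1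
    show ∑ l, C i l * v l = v i
    exact h4
  refine ⟨v, hvpos, hsum, hfix, ?_⟩
  refine tendsto_pi_nhds.2 ?_
  intro i
  rw [tendsto_pi_nhds]
  intro j
  exact hent i j
end

section
/- Let n ≥ 1 and let N : Fin n → Finset (Fin n) be fixed out-neighborhoods with j ∉ N j for all j, such that the digraph with edge set {(i, j) : j ∈ N i} is strongly connected (for all i, j there is a directed path from i to j). Define x, y : ℕ → Fin n → ℝ by x 0 = x̂ (arbitrary initial masses), y 0 j = 1 for all j, and for every k and j: x (k+1) j = (1/(1 + |N j|)) · x k j + ∑_{i : j ∈ N i} (1/(1 + |N i|)) · x k i, and the same recursion for y. Then for every agent j, the ratio x k j / y k j converges, as k → ∞, to (1/n) ∑_i x̂ i. (The stabilized-network instance of Theorem 2 with the explicit OpenRC weights: after composition changes cease, every active agent's ratio converges to the exact average of the joining masses.) -/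
open Filter

/-- lazy reachability: `i` reaches `j` in exactly `ℓ` steps where each step is
either an edge or staying put. -/
def openRC_reach {n : ℕ} (N : Fin n → Finset (Fin n)) : ℕ → Fin n → Fin n → Prop
  | 0 => fun i j => i = j
  | (ℓ+1) => fun i j => ∃ m, openRC_reach N ℓ i m ∧ (j = m ∨ j ∈ N m)

lemma openRC_reach_mono {n : ℕ} (N : Fin n → Finset (Fin n)) {ℓ ℓ' : ℕ} (h : ℓ ≤ ℓ')
    {i j : Fin n} (hr : openRC_reach N ℓ i j) : openRC_reach N ℓ' i j := by
  induction ℓ' with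
  | zero => simpa [Nat.le_zero.mp h] using hr
  | succ m ih =>
    rcases Nat.lt_or_ge ℓ (m+1) with h' | h'
    · exact ⟨j, ih (Nat.lt_succ_iff.mp h'), Or.inl rfl⟩
    · have : ℓ = m + 1 := le_antisymm h h'
      subst this; exact hr

lemma openRC_reach_of_rtg {n : ℕ} (N : Fin n → Finset (Fin n)) {i j : Fin n}
    (h : Relation.ReflTransGen (fun a b => b ∈ N a) i j) :
    ∃ ℓ, openRC_reach N ℓ i j := by
  induction h with
  | refl => exact ⟨0, rfl⟩
  | tail _ hbc ih =>
    obtain ⟨ℓ, hl⟩ := ih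
    exact ⟨ℓ + 1, _, hl, Or.inr hbc⟩

lemma openRC_reach_univ {n : ℕ} (N : Fin n → Finset (Fin n))
    (hconn : ∀ i j : Fin n, Relation.ReflTransGen (fun a b => b ∈ N a) i j) :
    ∃ T : ℕ, ∀ i j : Fin n, openRC_reach N T i j := by
  choose f hf using fun i j => openRC_reach_of_rtg N (hconn i j)
  refine ⟨Finset.univ.sup (fun p : Fin n × Fin n => f p.1 p.2), fun i j => ?_⟩
  exact openRC_reach_mono N (Finset.le_sup (Finset.mem_univ (i, j))) (hf i j)

lemma openRC_sum_invariant {n : ℕ} (N : Fin n → Finset (Fin n)) (u : Fin n → ℝ) :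
    ∑ j, ((1 / (1 + ((N j).card : ℝ))) * u j
      + ∑ i ∈ Finset.univ.filter (fun i => j ∈ N i), (1 / (1 + ((N i).card : ℝ))) * u i)
      = ∑ i, u i := by
  rw [Finset.sum_add_distrib]
  have h1 : ∑ j, ∑ i ∈ Finset.univ.filter (fun i => j ∈ N i),
      (1 / (1 + ((N i).card : ℝ))) * u i
      = ∑ i, ((N i).card : ℝ) * ((1 / (1 + ((N i).card : ℝ))) * u i) := by
    simp_rw [Finset.sum_filter]
    rw [Finset.sum_comm]
    refine Finset.sum_congr rfl fun i _ => ?_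
    rw [Finset.sum_ite_mem]
    rw [Finset.univ_inter, Finset.sum_const, nsmul_eq_mul]
  rw [h1, ← Finset.sum_add_distrib]
  refine Finset.sum_congr rfl fun i _ => ?_
  have hpos : (0:ℝ) < 1 + ((N i).card : ℝ) := by positivity
  field_simp

lemma openRC_aux {n : ℕ} (hn : 1 ≤ n)
    (N : Fin n → Finset (Fin n))
    (hconn : ∀ i j : Fin n, Relation.ReflTransGen (fun a b => b ∈ N a) i j)
    (hne : (Finset.univ : Finset (Fin n)).Nonempty)
    (x y : ℕ → Fin n → ℝ)
    (hy0 : ∀ j, y 0 j = 1)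
    (hx : ∀ k, ∀ j, x (k + 1) j =
      (1 / (1 + ((N j).card : ℝ))) * x k j
        + ∑ i ∈ Finset.univ.filter (fun i => j ∈ N i),
            (1 / (1 + ((N i).card : ℝ))) * x k i)
    (hy : ∀ k, ∀ j, y (k + 1) j =
      (1 / (1 + ((N j).card : ℝ))) * y k j
        + ∑ i ∈ Finset.univ.filter (fun i => j ∈ N i),
            (1 / (1 + ((N i).card : ℝ))) * y k i) :
    ∃ T : ℕ, ∃ θ : ℝ, 0 < θ ∧ θ ≤ 1 ∧
      (∀ k j, x (k+1) j / y (k+1) j ≤ Finset.univ.sup' hne (fun i => x k i / y k i)) ∧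
      (∀ k i j, x (k+T) j / y (k+T) j ≤
        Finset.univ.sup' hne (fun i' => x k i' / y k i')
          - θ * (Finset.univ.sup' hne (fun i' => x k i' / y k i') - x k i / y k i)) := by
  classical
  obtain ⟨T, hT⟩ := openRC_reach_univ N hconn
  have hnpos : (0:ℝ) < n := by exact_mod_cast hn
  set a : Fin n → ℝ := fun i => 1 / (1 + ((N i).card : ℝ)) with ha
  set F : Fin n → Finset (Fin n) := fun j => Finset.univ.filter (fun i => j ∈ N i) with hF
  have hapos : ∀ i, 0 < a i := fun i => by
    have : (0:ℝ) < 1 + ((N i).card : ℝ) := by positivity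
    exact div_pos one_pos this
  set c : ℝ := 1 / (1 + (n:ℝ)) with hc
  have hcpos : 0 < c := by positivity
  have hc1 : c ≤ 1 := by
    rw [hc, div_le_one (by positivity)]; linarith
  have hca : ∀ i, c ≤ a i := by
    intro i
    have hcard : ((N i).card : ℝ) ≤ n := by
      have := (Finset.card_le_card (Finset.subset_univ (N i)))
      simpa using (Nat.cast_le.mpr this : ((N i).card : ℝ) ≤ ((Finset.univ : Finset (Fin n)).card : ℝ))
    rw [hc, ha]
    exact one_div_le_one_div_of_le (by positivity) (by linarith)
  have hy' : ∀ k j, y (k + 1) j = a j * y k j + ∑ i ∈ F j, a i * y k i := hy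
  have hx' : ∀ k j, x (k + 1) j = a j * x k j + ∑ i ∈ F j, a i * x k i := hx
  -- positivity of y
  have ypos : ∀ k j, 0 < y k j := by
    intro k
    induction k with
    | zero => intro j; simp [hy0 j]
    | succ k ih =>
      intro j
      rw [hy' k j]
      have h1 : 0 < a j * y k j := mul_pos (hapos j) (ih j)
      have h2 : 0 ≤ ∑ i ∈ F j, a i * y k i :=
        Finset.sum_nonneg fun i _ => le_of_lt (mul_pos (hapos i) (ih i))
      linarith
  -- sum of y is n
  have ysum : ∀ k, ∑ j, y k j = n := by
    intro k
    induction k with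
    | zero => simp [hy0]
    | succ k ih =>
      have h1 : ∑ j, y (k+1) j = ∑ i, y k i := by
        simp_rw [hy k]
        exact openRC_sum_invariant N (y k)
      rw [h1, ih]
  have yub : ∀ k j, y k j ≤ n := by
    intro k j
    have := Finset.single_le_sum (f := y k) (fun i _ => (ypos k i).le) (Finset.mem_univ j)
    rw [ysum k] at this; exact this
  -- one step lower bound
  have ystep : ∀ k j i0, (j = i0 ∨ j ∈ N i0) → c * y k i0 ≤ y (k+1) j := by
    intro k j i0 h
    rw [hy' k j]
    rcases h with h | h
    · subst h
      have h1 : c * y k j ≤ a j * y k j :=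
        mul_le_mul_of_nonneg_right (hca j) (ypos k j).le
      have h2 : 0 ≤ ∑ i ∈ F j, a i * y k i :=
        Finset.sum_nonneg fun i _ => le_of_lt (mul_pos (hapos i) (ypos k i))
      linarith
    · have hmem : i0 ∈ F j := by simp [hF, h]
      have h1 : a i0 * y k i0 ≤ ∑ i ∈ F j, a i * y k i :=
        Finset.single_le_sum (fun i _ => le_of_lt (mul_pos (hapos i) (ypos k i))) hmem
      have h2 : c * y k i0 ≤ a i0 * y k i0 :=
        mul_le_mul_of_nonneg_right (hca i0) (ypos k i0).le
      have h3 : 0 < a j * y k j := mul_pos (hapos j) (ypos k j)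
      linarith
  -- iterated lower bound along reachability
  have yreach : ∀ ℓ (i j : Fin n), openRC_reach N ℓ i j → ∀ k, c^ℓ * y k i ≤ y (k+ℓ) j := by
    intro ℓ
    induction ℓ with
    | zero => intro i j hij k; cases hij; simp
    | succ ℓ ih =>
      intro i j hij k
      obtain ⟨m, hm, hs⟩ := hij
      have h1 := ih i m hm k
      have h2 := ystep (k+ℓ) j m hs
      have h3 : c * (c^ℓ * y k i) ≤ c * y (k+ℓ) m :=
        mul_le_mul_of_nonneg_left h1 hcpos.le
      calc c^(ℓ+1) * y k i = c * (c^ℓ * y k i) := by ring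
        _ ≤ c * y (k+ℓ) m := h3
        _ ≤ y (k+ℓ+1) j := h2
  have yone : ∀ k, ∃ i, 1 ≤ y k i := by
    intro k
    by_contra h
    push_neg at h
    have : ∑ j, y k j < ∑ j : Fin n, (1:ℝ) :=
      Finset.sum_lt_sum_of_nonempty hne fun i _ => h i
    rw [ysum k] at this
    simp at this
  have ylb : ∀ k j, c^T ≤ y k j := by
    intro k j
    rcases le_or_gt T k with h | h
    · obtain ⟨i, hi⟩ := yone (k - T)
      have h1 := yreach T i j (hT i j) (k - T)
      rw [Nat.sub_add_cancel h] at h1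
      nlinarith [pow_pos hcpos T]
    · have hself : openRC_reach N k j j :=
        openRC_reach_mono N (Nat.zero_le k) rfl
      have h1 := yreach k j j hself 0
      rw [Nat.zero_add, hy0 j, mul_one] at h1
      have h2 : c^T ≤ c^k := pow_le_pow_of_le_one hcpos.le hc1 h.le
      linarith
  -- ratio dynamics
  set z : ℕ → Fin n → ℝ := fun k j => x k j / y k j with hz
  set M : ℕ → ℝ := fun k => Finset.univ.sup' hne (z k) with hM
  have zle : ∀ k j, z k j ≤ M k := fun k j => Finset.le_sup' (z k) (Finset.mem_univ j)
  have xz : ∀ k j, x k j = z k j * y k j := by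
    intro k j
    exact (div_mul_cancel₀ (x k j) (ypos k j).ne').symm
  set δ : ℝ := c * c^T / n with hδ
  have hδ0 : 0 < δ := by
    apply div_pos (mul_pos hcpos (pow_pos hcpos T)) hnpos
  have hδ1 : δ ≤ 1 := by
    rw [hδ, div_le_one hnpos]
    have h1 : c * c^T ≤ 1 := mul_le_one₀ hc1 (pow_pos hcpos T).le (pow_le_one₀ hcpos.le hc1)
    have h2 : (1:ℝ) ≤ n := by exact_mod_cast hn
    linarith
  have key : ∀ k j i0, (j = i0 ∨ j ∈ N i0) →
      z (k+1) j ≤ M k - δ * (M k - z k i0) := by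
    intro k j i0 h
    have hyy : 0 < y (k+1) j := ypos (k+1) j
    have hMz : 0 ≤ M k - z k i0 := by linarith [zle k i0]
    -- main estimate on x (k+1) j
    have main : x (k+1) j ≤ M k * y (k+1) j - (a i0 * y k i0) * (M k - z k i0) := by
      rw [hx' k j, hy' k j]
      rcases h with h | h
      · subst h
        have e1 : a j * x k j = (a j * y k j) * z k j := by rw [xz k j]; ring
        have h2 : ∑ i ∈ F j, a i * x k i ≤ ∑ i ∈ F j, (a i * y k i) * M k := by
          refine Finset.sum_le_sum fun i _ => ?_
          rw [xz k i]
          have hp : 0 ≤ a i * y k i := (mul_pos (hapos i) (ypos k i)).le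
          calc a i * (z k i * y k i) = (a i * y k i) * z k i := by ring
            _ ≤ (a i * y k i) * M k := mul_le_mul_of_nonneg_left (zle k i) hp
        have h3 : ∑ i ∈ F j, (a i * y k i) * M k = M k * ∑ i ∈ F j, a i * y k i := by
          rw [← Finset.sum_mul]; ring
        nlinarith [e1, h2, h3]
      · have hmem : i0 ∈ F j := by simp [hF, h]
        have hsx : ∑ i ∈ F j, a i * x k i
            = a i0 * x k i0 + ∑ i ∈ (F j).erase i0, a i * x k i :=
          (Finset.add_sum_erase _ _ hmem).symm
        have hsy : ∑ i ∈ F j, a i * y k i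
            = a i0 * y k i0 + ∑ i ∈ (F j).erase i0, a i * y k i :=
          (Finset.add_sum_erase _ _ hmem).symm
        have e1 : a i0 * x k i0 = (a i0 * y k i0) * z k i0 := by rw [xz k i0]; ring
        have h2 : ∑ i ∈ (F j).erase i0, a i * x k i
            ≤ ∑ i ∈ (F j).erase i0, (a i * y k i) * M k := by
          refine Finset.sum_le_sum fun i _ => ?_
          rw [xz k i]
          have hp : 0 ≤ a i * y k i := (mul_pos (hapos i) (ypos k i)).le
          calc a i * (z k i * y k i) = (a i * y k i) * z k i := by ring
            _ ≤ (a i * y k i) * M k := mul_le_mul_of_nonneg_left (zle k i) hp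
        have h3 : ∑ i ∈ (F j).erase i0, (a i * y k i) * M k
            = M k * ∑ i ∈ (F j).erase i0, a i * y k i := by
          rw [← Finset.sum_mul]; ring
        have e4 : a j * x k j ≤ (a j * y k j) * M k := by
          rw [xz k j]
          have hp : 0 ≤ a j * y k j := (mul_pos (hapos j) (ypos k j)).le
          calc a j * (z k j * y k j) = (a j * y k j) * z k j := by ring
            _ ≤ (a j * y k j) * M k := mul_le_mul_of_nonneg_left (zle k j) hp
        rw [hsx, hsy]
        nlinarith [e1, h2, h3, e4]
    have hw : c * c^T ≤ a i0 * y k i0 :=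
      mul_le_mul (hca i0) (ylb k i0) (pow_nonneg hcpos.le T) (hapos i0).le
    have hδn : δ * (n:ℝ) = c * c^T := div_mul_cancel₀ _ hnpos.ne'
    have h5 : δ * y (k+1) j ≤ a i0 * y k i0 := by
      have := yub (k+1) j
      nlinarith
    have h6 : δ * (M k - z k i0) * y (k+1) j ≤ (a i0 * y k i0) * (M k - z k i0) := by
      nlinarith [mul_le_mul_of_nonneg_right h5 hMz]
    show x (k+1) j / y (k+1) j ≤ M k - δ * (M k - z k i0)
    rw [div_le_iff₀ hyy]
    nlinarith [main, h6]
  have A : ∀ k j, z (k+1) j ≤ M k := by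
    intro k j
    have h := key k j j (Or.inl rfl)
    have := mul_nonneg hδ0.le (sub_nonneg.2 (zle k j))
    linarith
  have Mmono : ∀ k l, M (k+l) ≤ M k := by
    intro k l
    induction l with
    | zero => exact le_refl _
    | succ l ih =>
      have h : M (k+l+1) ≤ M (k+l) := Finset.sup'_le _ _ fun j _ => A (k+l) j
      exact h.trans ih
  have iter : ∀ ℓ (i j : Fin n), openRC_reach N ℓ i j →
      ∀ k, z (k+ℓ) j ≤ M k - δ^ℓ * (M k - z k i) := by
    intro ℓ
    induction ℓ with
    | zero =>
      intro i j hij k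
      cases hij
      simp
    | succ ℓ ih =>
      intro i j hij k
      obtain ⟨m, hm, hs⟩ := hij
      have h1 := key (k+ℓ) j m hs
      have h2 := ih i m hm k
      have h3 : M (k+ℓ) ≤ M k := Mmono k ℓ
      have p1 : (1-δ) * M (k+ℓ) ≤ (1-δ) * M k :=
        mul_le_mul_of_nonneg_left h3 (by linarith)
      have p2 : δ * z (k+ℓ) m ≤ δ * (M k - δ^ℓ * (M k - z k i)) :=
        mul_le_mul_of_nonneg_left h2 hδ0.le
      have : (k + (ℓ+1)) = (k + ℓ) + 1 := rfl
      rw [this, pow_succ]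
      nlinarith [h1, p1, p2]
  exact ⟨T, δ^T, pow_pos hδ0 T, pow_le_one₀ hδ0.le hδ1, A,
    fun k i j => iter T i j (hT i j) k⟩

/-- The stabilized-network instance of Theorem 2 of the OpenRC paper with the
explicit OpenRC weights: after composition changes cease, over a strongly
connected digraph, every agent's ratio `x k j / y k j` converges to the exact
average of the joining masses. -/
theorem openRC_stabilized_explicit_weights {n : ℕ} (hn : 1 ≤ n)
    (N : Fin n → Finset (Fin n))
    (hNself : ∀ j, j ∉ N j)
    (hconn : ∀ i j : Fin n, Relation.ReflTransGen (fun a b => b ∈ N a) i j)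
    (xhat : Fin n → ℝ)
    (x y : ℕ → Fin n → ℝ)
    (hx0 : ∀ j, x 0 j = xhat j)
    (hy0 : ∀ j, y 0 j = 1)
    (hx : ∀ k, ∀ j, x (k + 1) j =
      (1 / (1 + ((N j).card : ℝ))) * x k j
        + ∑ i ∈ Finset.univ.filter (fun i => j ∈ N i),
            (1 / (1 + ((N i).card : ℝ))) * x k i)
    (hy : ∀ k, ∀ j, y (k + 1) j =
      (1 / (1 + ((N j).card : ℝ))) * y k j
        + ∑ i ∈ Finset.univ.filter (fun i => j ∈ N i),
            (1 / (1 + ((N i).card : ℝ))) * y k i) :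
    ∀ j, Tendsto (fun k => x k j / y k j) atTop
      (nhds ((1 / (n : ℝ)) * ∑ i, xhat i)) := by
  classical
  have hnpos : (0:ℝ) < n := by exact_mod_cast hn
  haveI : NeZero n := ⟨by omega⟩
  have hne : (Finset.univ : Finset (Fin n)).Nonempty := Finset.univ_nonempty
  obtain ⟨T, θ, hθ0, hθ1, hA, hB⟩ := openRC_aux hn N hconn hne x y hy0 hx hy
  -- the negated dynamics, to get lower bounds
  have hx' : ∀ k, ∀ j, (fun k j => -(x k j)) (k + 1) j =
      (1 / (1 + ((N j).card : ℝ))) * (fun k j => -(x k j)) k j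
        + ∑ i ∈ Finset.univ.filter (fun i => j ∈ N i),
            (1 / (1 + ((N i).card : ℝ))) * (fun k j => -(x k j)) k i := by
    intro k j
    show -(x (k+1) j) = _
    rw [hx k j, neg_add]
    congr 1
    · ring
    · rw [← Finset.sum_neg_distrib]
      exact Finset.sum_congr rfl fun i _ => (mul_neg _ _).symm
  obtain ⟨T', θ', _, _, hA', _⟩ :=
    openRC_aux hn N hconn hne (fun k j => -(x k j)) y hy0 hx' hy
  set z : ℕ → Fin n → ℝ := fun k j => x k j / y k j with hz
  set M : ℕ → ℝ := fun k => Finset.univ.sup' hne (z k) with hM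
  set m : ℕ → ℝ := fun k => Finset.univ.inf' hne (z k) with hm
  have zleM : ∀ k j, z k j ≤ M k := fun k j => Finset.le_sup' (z k) (Finset.mem_univ j)
  have mlez : ∀ k j, m k ≤ z k j := fun k j => Finset.inf'_le (z k) (Finset.mem_univ j)
  have hAm : ∀ k j, m k ≤ z (k+1) j := by
    intro k j
    have h := hA' k j
    have h2 : Finset.univ.sup' hne (fun i => -(x k i) / y k i) ≤ -(m k) := by
      refine Finset.sup'_le _ _ fun i _ => ?_
      rw [neg_div]
      exact neg_le_neg (mlez k i)
    have h3 : -(x (k+1) j) / y (k+1) j = -(z (k+1) j) := by rw [neg_div]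
    rw [h3] at h
    have := h.trans h2
    linarith
  have Mstep : ∀ k, M (k+1) ≤ M k := fun k => Finset.sup'_le _ _ fun j _ => hA k j
  have mstep : ∀ k, m k ≤ m (k+1) := fun k => Finset.le_inf' _ _ fun j _ => hAm k j
  have Mmono : ∀ k l, M (k+l) ≤ M k := by
    intro k l
    induction l with
    | zero => exact le_refl _
    | succ l ih => exact (Mstep (k+l)).trans ih
  have mmono : ∀ k l, m k ≤ m (k+l) := by
    intro k l
    induction l with
    | zero => exact le_refl _
    | succ l ih => exact ih.trans (mstep (k+l))
  have hD0 : ∀ k, 0 ≤ M k - m k := by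
    intro k
    have := (mlez k ⟨0, hn⟩).trans (zleM k ⟨0, hn⟩)
    linarith
  -- contraction
  have contr : ∀ k, M (k+T) - m (k+T) ≤ (1-θ) * (M k - m k) := by
    intro k
    obtain ⟨i₀, -, hi₀⟩ := Finset.exists_mem_eq_inf' hne (z k)
    have h1 : M (k+T) ≤ M k - θ * (M k - m k) := by
      refine Finset.sup'_le _ _ fun j _ => ?_
      have h : z (k+T) j ≤ M k - θ * (M k - z k i₀) := hB k i₀ j
      have hmi : m k = z k i₀ := hi₀
      rw [hmi]
      exact h
    have h2 : m k ≤ m (k+T) := mmono k T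
    nlinarith
  set D : ℕ → ℝ := fun k => M k - m k with hD
  have Danti : Antitone D := by
    refine antitone_nat_of_succ_le fun k => ?_
    have := Mstep k
    have := mstep k
    simp only [hD]
    linarith
  have Dbdd : BddBelow (Set.range D) := ⟨0, by rintro _ ⟨k, rfl⟩; exact hD0 k⟩
  have hDtend : Tendsto D atTop (nhds (⨅ k, D k)) := tendsto_atTop_ciInf Danti Dbdd
  have hL0 : Tendsto D atTop (nhds 0) := by
    have hL : (⨅ k, D k) ≤ (1-θ) * (⨅ k, D k) := by
      have t1 : Tendsto (fun k => D (k+T)) atTop (nhds (⨅ k, D k)) :=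
        hDtend.comp (tendsto_add_atTop_nat T)
      have t2 : Tendsto (fun k => (1-θ) * D k) atTop (nhds ((1-θ) * (⨅ k, D k))) :=
        hDtend.const_mul _
      exact le_of_tendsto_of_tendsto' t1 t2 contr
    have hLnn : 0 ≤ ⨅ k, D k := le_ciInf fun k => hD0 k
    have : (⨅ k, D k) = 0 := by nlinarith
    rwa [this] at hDtend
  -- limits of M and m
  have MbddBelow : BddBelow (Set.range M) := by
    refine ⟨m 0, ?_⟩
    rintro _ ⟨k, rfl⟩
    have h1 : m 0 ≤ m k := by simpa using mmono 0 k
    have := hD0 k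
    linarith
  have Manti : Antitone M := antitone_nat_of_succ_le Mstep
  set L : ℝ := ⨅ k, M k with hL
  have hMtend : Tendsto M atTop (nhds L) := tendsto_atTop_ciInf Manti MbddBelow
  have hmtend : Tendsto m atTop (nhds L) := by
    have : (fun k => M k - D k) = m := by funext k; simp [hD]
    have h := hMtend.sub hL0
    rw [sub_zero] at h
    rwa [this] at h
  -- conservation of sums, positivity of y
  have ypos : ∀ k j, 0 < y k j := by
    intro k
    induction k with
    | zero => intro j; simp [hy0 j]
    | succ k ih =>
      intro j
      rw [hy k j]
      have hpos : (0:ℝ) < 1 + ((N j).card : ℝ) := by positivity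
      have h1 : 0 < (1 / (1 + ((N j).card : ℝ))) * y k j :=
        mul_pos (by positivity) (ih j)
      have h2 : 0 ≤ ∑ i ∈ Finset.univ.filter (fun i => j ∈ N i),
          (1 / (1 + ((N i).card : ℝ))) * y k i := by
        refine Finset.sum_nonneg fun i _ => le_of_lt ?_
        exact mul_pos (by positivity) (ih i)
      linarith
  have ysum : ∀ k, ∑ j, y k j = n := by
    intro k
    induction k with
    | zero => simp [hy0]
    | succ k ih =>
      have h1 : ∑ j, y (k+1) j = ∑ i, y k i := by
        simp_rw [hy k]
        exact openRC_sum_invariant N (y k)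
      rw [h1, ih]
  have xsum : ∀ k, ∑ j, x k j = ∑ i, xhat i := by
    intro k
    induction k with
    | zero => exact Finset.sum_congr rfl fun j _ => hx0 j
    | succ k ih =>
      have h1 : ∑ j, x (k+1) j = ∑ i, x k i := by
        simp_rw [hx k]
        exact openRC_sum_invariant N (x k)
      rw [h1, ih]
  have xz : ∀ k j, x k j = z k j * y k j := fun k j =>
    (div_mul_cancel₀ (x k j) (ypos k j).ne').symm
  -- sandwich the conserved sum
  have hlow : ∀ k, (n:ℝ) * m k ≤ ∑ i, xhat i := by
    intro k
    rw [← xsum k]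
    have h1 : ∑ j, m k * y k j ≤ ∑ j, x k j := by
      refine Finset.sum_le_sum fun j _ => ?_
      rw [xz k j]
      exact mul_le_mul_of_nonneg_right (mlez k j) (ypos k j).le
    rw [← Finset.mul_sum, ysum k] at h1
    linarith
  have hhigh : ∀ k, ∑ i, xhat i ≤ (n:ℝ) * M k := by
    intro k
    rw [← xsum k]
    have h1 : ∑ j, x k j ≤ ∑ j, M k * y k j := by
      refine Finset.sum_le_sum fun j _ => ?_
      rw [xz k j]
      exact mul_le_mul_of_nonneg_right (zleM k j) (ypos k j).le
    rw [← Finset.mul_sum, ysum k] at h1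
    linarith
  -- identify the limit
  have hLid : (n:ℝ) * L = ∑ i, xhat i := by
    have t1 : Tendsto (fun k => (n:ℝ) * m k) atTop (nhds ((n:ℝ) * L)) :=
      hmtend.const_mul _
    have t2 : Tendsto (fun k => (n:ℝ) * M k) atTop (nhds ((n:ℝ) * L)) :=
      hMtend.const_mul _
    have h1 : (n:ℝ) * L ≤ ∑ i, xhat i := le_of_tendsto t1 (Eventually.of_forall hlow)
    have h2 : ∑ i, xhat i ≤ (n:ℝ) * L := ge_of_tendsto t2 (Eventually.of_forall hhigh)
    linarith
  have hLval : L = (1 / (n:ℝ)) * ∑ i, xhat i := by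
    field_simp
    linarith
  intro j
  rw [← hLval]
  exact tendsto_of_tendsto_of_tendsto_of_le_of_le hmtend hMtend
    (fun k => mlez k j) (fun k => zleM k j)
end
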